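/- Fix N ≥ 0 and suppose Z(i) + α^{N+1} V_{AS;0}(i) ≥ V*_{M_{k,N}}(j) for all root states j and all states i in layer N+1 descended from j. Then V*_{M_k}(j) = V*_{M_{k,N}}(j) for all root states j; in particular the optimal stationary policy of the truncated MDP M_{k,N} is optimal for M_k starting from any root state. -/
import Mathlib
set_option linter.unusedSectionVars false


open Finset

variable {S A : Type*} [Fintype S] [Fintype A] [DecidableEq S] [Nonempty S] [Nonempty A]

/-- Belief distribution after taking the blind action sequence `l` from root state `s`:
the `s`-th row of the product of the transition matrices along `l`. -/
noncomputable def belief (T : A → Matrix S S ℝ) (s : S) (l : List A) : S → ℝ :=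
  fun s' => ((l.map T).prod) s s'

/-- Expected one-step cost of action `a` under belief `B`. -/
def beliefCost (C : A → S → ℝ) (B : S → ℝ) (a : A) : ℝ := ∑ s, B s * C a s

/-- Belief obtained from `B` by one further (blind) transition under action `a`. -/
def beliefStep (T : A → Matrix S S ℝ) (B : S → ℝ) (a : A) : S → ℝ :=
  fun s' => ∑ s, B s * T a s s'

/-- Bellman optimality equation for the sensing-cost MDP `M_k`: at every state
`(s, l)` the value is the minimum, over actions `a`, of the blind continuation and
the sensing continuation. -/
def IsBellmanMk (T : A → Matrix S S ℝ) (C : A → S → ℝ) (α k : ℝ)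
    (V : S → List A → ℝ) : Prop :=
  ∀ (s : S) (l : List A),
    V s l = Finset.univ.inf' Finset.univ_nonempty (fun a : A =>
      min (beliefCost C (belief T s l) a + α * V s (l ++ [a]))
          (beliefCost C (belief T s l) a + k
            + α * ∑ j, beliefStep T (belief T s l) a j * V j []))

/-- Bellman optimality equations for the depth-`N` truncation `M_{k,N}`: below layer `N`
both blind and sensing actions are available; at layer `N` sensing is forced. -/
def IsBellmanMkTrunc (T : A → Matrix S S ℝ) (C : A → S → ℝ) (α k : ℝ) (N : ℕ)
    (V : S → List A → ℝ) : Prop :=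
  (∀ (s : S) (l : List A), l.length < N →
    V s l = Finset.univ.inf' Finset.univ_nonempty (fun a : A =>
      min (beliefCost C (belief T s l) a + α * V s (l ++ [a]))
          (beliefCost C (belief T s l) a + k
            + α * ∑ j, beliefStep T (belief T s l) a j * V j []))) ∧
  (∀ (s : S) (l : List A), l.length = N →
    V s l = Finset.univ.inf' Finset.univ_nonempty (fun a : A =>
      beliefCost C (belief T s l) a + k
        + α * ∑ j, beliefStep T (belief T s l) a j * V j []))
/-- Expected cumulative discounted cost of the blind action sequence `l` from root `s`. -/
noncomputable def Zcost (T : A → Matrix S S ℝ) (C : A → S → ℝ) (α : ℝ)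
    (s : S) (l : List A) : ℝ :=
  ∑ i : Fin l.length, α ^ (i : ℕ) * beliefCost C (belief T s (l.take i)) (l.get i)

/-- Zero-sensing-cost always-sense value at belief `B`: `min_a B·Q*(a)`. -/
noncomputable def VAS0 (Qstar : A → S → ℝ) (B : S → ℝ) : ℝ :=
  Finset.univ.inf' Finset.univ_nonempty (fun a : A => ∑ s, B s * Qstar a s)
lemma belief_nil (T : A → Matrix S S ℝ) (s s' : S) :
    belief T s [] s' = if s = s' then 1 else 0 := by
  simp [belief, Matrix.one_apply]

lemma belief_append (T : A → Matrix S S ℝ) (s : S) (l : List A) (a : A) :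
    belief T s (l ++ [a]) = beliefStep T (belief T s l) a := by
  funext s'
  simp [belief, beliefStep, Matrix.mul_apply]

lemma beliefStep_nonneg (T : A → Matrix S S ℝ) (hT : ∀ a s s', 0 ≤ T a s s')
    (B : S → ℝ) (hB : ∀ s, 0 ≤ B s) (a : A) (s' : S) : 0 ≤ beliefStep T B a s' :=
  Finset.sum_nonneg fun s _ => mul_nonneg (hB s) (hT a s s')

lemma beliefStep_sum (T : A → Matrix S S ℝ) (hTsum : ∀ a s, ∑ s', T a s s' = 1)
    (B : S → ℝ) (hB1 : ∑ s, B s = 1) (a : A) : ∑ s', beliefStep T B a s' = 1 := by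
  unfold beliefStep
  rw [Finset.sum_comm]
  simp_rw [← Finset.mul_sum, hTsum, mul_one, hB1]

lemma belief_nonneg (T : A → Matrix S S ℝ) (hT : ∀ a s s', 0 ≤ T a s s')
    (s : S) (l : List A) (s' : S) : 0 ≤ belief T s l s' := by
  induction l using List.reverseRecOn generalizing s' with
  | nil => rw [belief_nil]; split <;> norm_num
  | append_singleton l a ih =>
      rw [belief_append]
      exact beliefStep_nonneg T hT _ ih a s'

lemma belief_sum (T : A → Matrix S S ℝ) (hTsum : ∀ a s, ∑ s', T a s s' = 1)
    (s : S) (l : List A) : ∑ s', belief T s l s' = 1 := by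
  induction l using List.reverseRecOn with
  | nil => simp [belief_nil]
  | append_singleton l a ih =>
      rw [belief_append]
      exact beliefStep_sum T hTsum _ ih a

lemma Zcost_nil (T : A → Matrix S S ℝ) (C : A → S → ℝ) (α : ℝ) (s : S) :
    Zcost T C α s [] = 0 := by simp [Zcost]

lemma Zcost_eq_range (T : A → Matrix S S ℝ) (C : A → S → ℝ) (α : ℝ) (s : S)
    (l : List A) (a₀ : A) :
    Zcost T C α s l
      = ∑ i ∈ Finset.range l.length,
          α ^ i * beliefCost C (belief T s (l.take i)) (l.getD i a₀) := by
  unfold Zcost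
  rw [← Fin.sum_univ_eq_sum_range]
  refine Finset.sum_congr rfl fun i _ => ?_
  simp [List.getD_eq_getElem l a₀ i.isLt]

lemma Zcost_append (T : A → Matrix S S ℝ) (C : A → S → ℝ) (α : ℝ) (s : S)
    (l : List A) (a : A) :
    Zcost T C α s (l ++ [a])
      = Zcost T C α s l + α ^ l.length * beliefCost C (belief T s l) a := by
  rw [Zcost_eq_range T C α s (l ++ [a]) a, Zcost_eq_range T C α s l a]
  rw [List.length_append, List.length_singleton, Finset.sum_range_succ]
  congr 1
  · refine Finset.sum_congr rfl fun i hi => ?_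
    rw [Finset.mem_range] at hi
    rw [List.take_append_of_le_length hi.le, List.getD_append _ _ _ _ hi]
  · rw [List.take_append_of_le_length le_rfl, List.take_length,
      List.getD_append_right _ _ _ _ le_rfl]
    simp

lemma weighted_le (p g h : S → ℝ) (c : ℝ) (hp : ∀ j, 0 ≤ p j) (hp1 : ∑ j, p j = 1)
    (hgh : ∀ j, g j ≤ h j + c) : ∑ j, p j * g j ≤ (∑ j, p j * h j) + c := by
  have h1 : ∑ j, p j * g j ≤ ∑ j, p j * (h j + c) :=
    Finset.sum_le_sum fun j _ => mul_le_mul_of_nonneg_left (hgh j) (hp j)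
  calc ∑ j, p j * g j ≤ ∑ j, p j * (h j + c) := h1
    _ = (∑ j, p j * h j) + (∑ j, p j) * c := by
        simp [mul_add, Finset.sum_add_distrib, Finset.sum_mul]
    _ = (∑ j, p j * h j) + c := by rw [hp1, one_mul]

lemma VAS0_le_step (T : A → Matrix S S ℝ) (C : A → S → ℝ) (α : ℝ)
    (Vstar : S → ℝ) (Qstar : A → S → ℝ)
    (hQstar : ∀ a s, Qstar a s = C a s + α * ∑ s', T a s s' * Vstar s')
    (B : S → ℝ) (a : A) :
    VAS0 Qstar B ≤ beliefCost C B a + α * ∑ j, beliefStep T B a j * Vstar j := by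
  have h1 : VAS0 Qstar B ≤ ∑ s, B s * Qstar a s :=
    Finset.inf'_le _ (Finset.mem_univ a)
  refine h1.trans_eq ?_
  simp only [hQstar, beliefCost, beliefStep, mul_add, Finset.sum_add_distrib,
    Finset.mul_sum, Finset.sum_mul]
  congr 1
  rw [Finset.sum_comm]
  refine Finset.sum_congr rfl fun j _ => Finset.sum_congr rfl fun s _ => by ring

lemma sum_Vstar_le_VAS0 (Vstar : S → ℝ) (Qstar : A → S → ℝ)
    (hBellman : ∀ s, Vstar s =
      Finset.univ.inf' Finset.univ_nonempty (fun a : A => Qstar a s))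
    (p : S → ℝ) (hp : ∀ s, 0 ≤ p s) :
    ∑ s, p s * Vstar s ≤ VAS0 Qstar p := by
  refine Finset.le_inf' _ _ fun b _ => Finset.sum_le_sum fun s _ => ?_
  refine mul_le_mul_of_nonneg_left ?_ (hp s)
  rw [hBellman s]
  exact Finset.inf'_le _ (Finset.mem_univ b)

lemma VAS0_belief_nil (T : A → Matrix S S ℝ) (Vstar : S → ℝ) (Qstar : A → S → ℝ)
    (hBellman : ∀ s, Vstar s =
      Finset.univ.inf' Finset.univ_nonempty (fun a : A => Qstar a s))
    (j : S) : VAS0 Qstar (belief T j []) = Vstar j := by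
  rw [hBellman j]
  unfold VAS0
  congr 1
  funext a
  simp [belief_nil, ite_mul, Finset.sum_ite_eq]

/-- If `Z(i) + α^{N+1} V_{AS;0}(i) ≥ V*_{M_{k,N}}(j)` for every root `j` and every state
`i` in layer `N+1` descended from `j`, then `V*_{M_k}(j) = V*_{M_{k,N}}(j)` for all
root states `j`: the truncated optimal policy is optimal for `M_k` from any root state. -/
theorem truncated_policy_optimal_for_Mk
    (T : A → Matrix S S ℝ) (C : A → S → ℝ) (α k : ℝ)
    (hα0 : 0 < α) (hα1 : α < 1) (hk : 0 < k)
    (hTnonneg : ∀ a s s', 0 ≤ T a s s') (hTsum : ∀ a s, ∑ s', T a s s' = 1)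
    (Vstar : S → ℝ) (Qstar : A → S → ℝ)
    (hQstar : ∀ a s, Qstar a s = C a s + α * ∑ s', T a s s' * Vstar s')
    (hBellman : ∀ s, Vstar s =
      Finset.univ.inf' Finset.univ_nonempty (fun a : A => Qstar a s))
    (N : ℕ)
    (V : S → List A → ℝ) (hV : IsBellmanMk T C α k V)
    (hVbdd : ∃ M, ∀ s l, |V s l| ≤ M)
    (VN : S → List A → ℝ) (hVN : IsBellmanMkTrunc T C α k N VN)
    (hcond : ∀ (j : S) (l : List A), l.length = N + 1 →
      Zcost T C α j l + α ^ (N + 1) * VAS0 Qstar (belief T j l) ≥ VN j []) :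
    ∀ j : S, V j [] = VN j [] := by
  obtain ⟨M, hM⟩ := hVbdd
  have hBn : ∀ (s : S) (l : List A) (s' : S), 0 ≤ belief T s l s' :=
    belief_nonneg T hTnonneg
  have hB1 : ∀ (s : S) (l : List A), ∑ s', belief T s l s' = 1 :=
    belief_sum T hTsum
  obtain ⟨a₀⟩ := (inferInstance : Nonempty A)
  obtain ⟨s₀⟩ := (inferInstance : Nonempty S)
  -- Part 1: the lower bound V ≥ VAS0 ∘ belief
  set Mq : ℝ := Finset.univ.sup' Finset.univ_nonempty (fun s => Qstar a₀ s) with hMq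
  have hVAS0bd : ∀ (s : S) (l : List A), VAS0 Qstar (belief T s l) ≤ Mq := by
    intro s l
    refine (Finset.inf'_le _ (Finset.mem_univ a₀)).trans ?_
    calc ∑ x, belief T s l x * Qstar a₀ x ≤ ∑ x, belief T s l x * Mq :=
        Finset.sum_le_sum fun x _ =>
          mul_le_mul_of_nonneg_left (Finset.le_sup' _ (Finset.mem_univ x)) (hBn s l x)
      _ = Mq := by rw [← Finset.sum_mul, hB1, one_mul]
  set E : Set ℝ :=
    Set.range (fun p : S × List A => VAS0 Qstar (belief T p.1 p.2) - V p.1 p.2) with hE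
  have hEne : E.Nonempty := ⟨_, ⟨(s₀, []), rfl⟩⟩
  have hEbdd : BddAbove E := by
    refine ⟨Mq + M, ?_⟩
    rintro x ⟨⟨s, l⟩, rfl⟩
    have h1 := hVAS0bd s l
    have h2 := abs_le.mp (hM s l)
    dsimp
    linarith [h2.1]
  set ε : ℝ := sSup E with hεdef
  have hmem : ∀ (s : S) (l : List A), VAS0 Qstar (belief T s l) - V s l ≤ ε :=
    fun s l => le_csSup hEbdd ⟨(s, l), rfl⟩
  have hstepε : ∀ (s : S) (l : List A), VAS0 Qstar (belief T s l) - V s l ≤ α * ε := by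
    intro s l
    obtain ⟨a, -, ha⟩ := Finset.exists_mem_eq_inf' Finset.univ_nonempty (fun a : A =>
      min (beliefCost C (belief T s l) a + α * V s (l ++ [a]))
          (beliefCost C (belief T s l) a + k
            + α * ∑ j, beliefStep T (belief T s l) a j * V j []))
    have hVsl : V s l = min (beliefCost C (belief T s l) a + α * V s (l ++ [a]))
        (beliefCost C (belief T s l) a + k
          + α * ∑ j, beliefStep T (belief T s l) a j * V j []) := (hV s l).trans ha
    have hkey : VAS0 Qstar (belief T s l)
        ≤ beliefCost C (belief T s l) a
          + α * ∑ j, beliefStep T (belief T s l) a j * Vstar j :=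
      VAS0_le_step T C α Vstar Qstar hQstar _ a
    rcases le_total (beliefCost C (belief T s l) a + α * V s (l ++ [a]))
        (beliefCost C (belief T s l) a + k
          + α * ∑ j, beliefStep T (belief T s l) a j * V j []) with hmin | hmin
    · rw [min_eq_left hmin] at hVsl
      have h2 : ∑ j, beliefStep T (belief T s l) a j * Vstar j
          ≤ VAS0 Qstar (beliefStep T (belief T s l) a) :=
        sum_Vstar_le_VAS0 Vstar Qstar hBellman _
          (beliefStep_nonneg T hTnonneg _ (hBn s l) a)
      have h3 : VAS0 Qstar (belief T s (l ++ [a])) - V s (l ++ [a]) ≤ ε :=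
        hmem s (l ++ [a])
      rw [belief_append] at h3
      have h4 : ∑ j, beliefStep T (belief T s l) a j * Vstar j
          ≤ V s (l ++ [a]) + ε := by linarith
      nlinarith [mul_le_mul_of_nonneg_left h4 hα0.le]
    · rw [min_eq_right hmin] at hVsl
      have h4 : ∀ j, Vstar j ≤ V j [] + ε := by
        intro j
        have h5 := hmem j []
        rw [VAS0_belief_nil T Vstar Qstar hBellman j] at h5
        linarith
      have h5 : ∑ j, beliefStep T (belief T s l) a j * Vstar j
          ≤ (∑ j, beliefStep T (belief T s l) a j * V j []) + ε :=
        weighted_le _ _ _ _ (beliefStep_nonneg T hTnonneg _ (hBn s l) a)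
          (beliefStep_sum T hTsum _ (hB1 s l) a) h4
      nlinarith [mul_le_mul_of_nonneg_left h5 hα0.le]
  have hεneg : ε ≤ 0 := by
    have h1 : ε ≤ α * ε := by
      refine csSup_le hEne ?_
      rintro x ⟨⟨s, l⟩, rfl⟩
      exact hstepε s l
    nlinarith
  have hlow : ∀ (s : S) (l : List A), VAS0 Qstar (belief T s l) ≤ V s l := by
    intro s l
    have := hmem s l
    linarith
  -- Part 2: VN j [] ≤ Zcost + α^len * VN j l along blind prefixes
  have hQle : ∀ (j : S) (l : List A), l.length ≤ N →
      VN j [] ≤ Zcost T C α j l + α ^ l.length * VN j l := by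
    intro j l
    induction l using List.reverseRecOn with
    | nil => intro _; simp [Zcost_nil]
    | append_singleton l a ih =>
        intro hlen
        rw [List.length_append, List.length_singleton] at hlen
        have hl : l.length < N := by omega
        have h1 := ih (by omega)
        have h2 : VN j l ≤ beliefCost C (belief T j l) a + α * VN j (l ++ [a]) := by
          rw [hVN.1 j l hl]
          exact (Finset.inf'_le _ (Finset.mem_univ a)).trans (min_le_left _ _)
        rw [Zcost_append, List.length_append, List.length_singleton, pow_succ]
        nlinarith [mul_le_mul_of_nonneg_left h2 (pow_nonneg hα0.le l.length)]
  -- Part 3: VN ≤ V at roots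
  set d : ℝ := Finset.univ.sup' Finset.univ_nonempty (fun j : S => VN j [] - V j [])
    with hd
  set d' : ℝ := max d 0 with hd'
  have hd'0 : 0 ≤ d' := le_max_right _ _
  have hdd' : d ≤ d' := le_max_left _ _
  have hdle : ∀ i : S, VN i [] ≤ V i [] + d' := by
    intro i
    have h1 : VN i [] - V i [] ≤ d := by
      rw [hd]; exact Finset.le_sup' (fun i : S => VN i [] - V i []) (Finset.mem_univ i)
    linarith
  have key1 : ∀ (n : ℕ) (j : S) (l : List A), l.length + n = N + 1 →
      VN j [] ≤ Zcost T C α j l + α ^ l.length * V j l + α * d' := by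
    intro n
    induction n with
    | zero =>
        intro j l hlen
        rw [Nat.add_zero] at hlen
        have h1 := hcond j l hlen
        have h2 : α ^ (N + 1) * VAS0 Qstar (belief T j l) ≤ α ^ (N + 1) * V j l :=
          mul_le_mul_of_nonneg_left (hlow j l) (pow_nonneg hα0.le _)
        rw [hlen]
        nlinarith [mul_nonneg hα0.le hd'0]
    | succ n ih =>
        intro j l hlen
        have hlenN : l.length ≤ N := by omega
        obtain ⟨a, -, ha⟩ := Finset.exists_mem_eq_inf' Finset.univ_nonempty (fun a : A =>
          min (beliefCost C (belief T j l) a + α * V j (l ++ [a]))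
              (beliefCost C (belief T j l) a + k
                + α * ∑ i, beliefStep T (belief T j l) a i * V i []))
        have hVjl : V j l = min (beliefCost C (belief T j l) a + α * V j (l ++ [a]))
            (beliefCost C (belief T j l) a + k
              + α * ∑ i, beliefStep T (belief T j l) a i * V i []) := (hV j l).trans ha
        rcases le_total (beliefCost C (belief T j l) a + α * V j (l ++ [a]))
            (beliefCost C (belief T j l) a + k
              + α * ∑ i, beliefStep T (belief T j l) a i * V i []) with hmin | hmin
        · rw [min_eq_left hmin] at hVjl
          have h1 := ih j (l ++ [a])
            (by rw [List.length_append, List.length_singleton]; omega)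
          rw [Zcost_append, List.length_append, List.length_singleton, pow_succ] at h1
          have h2 : α ^ l.length * V j l
              = α ^ l.length * (beliefCost C (belief T j l) a + α * V j (l ++ [a])) := by
            rw [hVjl]
          nlinarith [h1, h2]
        · rw [min_eq_right hmin] at hVjl
          have h1 := hQle j l hlenN
          have h2 : VN j l ≤ beliefCost C (belief T j l) a + k
              + α * ∑ i, beliefStep T (belief T j l) a i * VN i [] := by
            rcases lt_or_eq_of_le hlenN with hlt | heq
            · rw [hVN.1 j l hlt]
              exact (Finset.inf'_le _ (Finset.mem_univ a)).trans (min_le_right _ _)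
            · rw [hVN.2 j l heq]
              exact Finset.inf'_le _ (Finset.mem_univ a)
          have h3 : ∑ i, beliefStep T (belief T j l) a i * VN i []
              ≤ (∑ i, beliefStep T (belief T j l) a i * V i []) + d' :=
            weighted_le _ _ _ _ (beliefStep_nonneg T hTnonneg _ (hBn j l) a)
              (beliefStep_sum T hTsum _ (hB1 j l) a) hdle
          have h4 : VN j l ≤ V j l + α * d' := by
            nlinarith [mul_le_mul_of_nonneg_left h3 hα0.le]
          have h5 : α ^ l.length * VN j l ≤ α ^ l.length * (V j l + α * d') :=
            mul_le_mul_of_nonneg_left h4 (pow_nonneg hα0.le _)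
          have h6 : α ^ l.length ≤ 1 := pow_le_one₀ hα0.le hα1.le
          nlinarith [mul_nonneg hα0.le hd'0]
  have hdir1 : ∀ j : S, VN j [] ≤ V j [] := by
    have hstep2 : ∀ j : S, VN j [] ≤ V j [] + α * d' := by
      intro j
      have h1 := key1 (N + 1) j [] (by simp)
      simpa [Zcost_nil] using h1
    have hd2 : d ≤ α * d' := by
      rw [hd]
      refine Finset.sup'_le _ _ fun j _ => ?_
      have := hstep2 j
      linarith
    have hd'2 : d' ≤ α * d' := by
      rw [hd']
      exact max_le hd2 (mul_nonneg hα0.le hd'0)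
    have hd'neg : d' ≤ 0 := by nlinarith
    intro j
    have h1 : VN j [] - V j [] ≤ d := by
      rw [hd]; exact Finset.le_sup' (fun i : S => VN i [] - V i []) (Finset.mem_univ j)
    linarith
  -- Part 4: V ≤ VN at roots
  set e : ℝ := Finset.univ.sup' Finset.univ_nonempty (fun j : S => V j [] - VN j [])
    with he
  set e' : ℝ := max e 0 with he'
  have he'0 : 0 ≤ e' := le_max_right _ _
  have hee' : e ≤ e' := le_max_left _ _
  have hele : ∀ i : S, V i [] ≤ VN i [] + e' := by
    intro i
    have h1 : V i [] - VN i [] ≤ e := by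
      rw [he]; exact Finset.le_sup' (fun i : S => V i [] - VN i []) (Finset.mem_univ i)
    linarith
  have key2 : ∀ (n : ℕ) (j : S) (l : List A), l.length + n = N →
      V j l ≤ VN j l + α * e' := by
    intro n
    induction n with
    | zero =>
        intro j l hlen
        rw [Nat.add_zero] at hlen
        rw [hVN.2 j l hlen, ← sub_le_iff_le_add]
        refine Finset.le_inf' _ _ fun a _ => ?_
        have h1 : V j l ≤ beliefCost C (belief T j l) a + k
            + α * ∑ i, beliefStep T (belief T j l) a i * V i [] := by
          rw [hV j l]
          exact (Finset.inf'_le _ (Finset.mem_univ a)).trans (min_le_right _ _)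
        have h3 : ∑ i, beliefStep T (belief T j l) a i * V i []
            ≤ (∑ i, beliefStep T (belief T j l) a i * VN i []) + e' :=
          weighted_le _ _ _ _ (beliefStep_nonneg T hTnonneg _ (hBn j l) a)
            (beliefStep_sum T hTsum _ (hB1 j l) a) hele
        nlinarith [mul_le_mul_of_nonneg_left h3 hα0.le]
    | succ n ih =>
        intro j l hlen
        have hlt : l.length < N := by omega
        rw [hVN.1 j l hlt, ← sub_le_iff_le_add]
        refine Finset.le_inf' _ _ fun a _ => ?_
        rw [le_min_iff]
        constructor
        · have h1 : V j l ≤ beliefCost C (belief T j l) a + α * V j (l ++ [a]) := by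
            rw [hV j l]
            exact (Finset.inf'_le _ (Finset.mem_univ a)).trans (min_le_left _ _)
          have h2 := ih j (l ++ [a])
            (by rw [List.length_append, List.length_singleton]; omega)
          nlinarith [mul_le_mul_of_nonneg_left h2 hα0.le,
            mul_nonneg (mul_nonneg hα0.le (sub_nonneg.mpr hα1.le)) he'0]
        · have h1 : V j l ≤ beliefCost C (belief T j l) a + k
              + α * ∑ i, beliefStep T (belief T j l) a i * V i [] := by
            rw [hV j l]
            exact (Finset.inf'_le _ (Finset.mem_univ a)).trans (min_le_right _ _)
          have h3 : ∑ i, beliefStep T (belief T j l) a i * V i []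
              ≤ (∑ i, beliefStep T (belief T j l) a i * VN i []) + e' :=
            weighted_le _ _ _ _ (beliefStep_nonneg T hTnonneg _ (hBn j l) a)
              (beliefStep_sum T hTsum _ (hB1 j l) a) hele
          nlinarith [mul_le_mul_of_nonneg_left h3 hα0.le]
  have hdir2 : ∀ j : S, V j [] ≤ VN j [] := by
    have hstep2 : ∀ j : S, V j [] ≤ VN j [] + α * e' := fun j => key2 N j [] (by simp)
    have he2 : e ≤ α * e' := by
      rw [he]
      refine Finset.sup'_le _ _ fun j _ => ?_
      have := hstep2 j
      linarith
    have he'2 : e' ≤ α * e' := by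
      rw [he']
      exact max_le he2 (mul_nonneg hα0.le he'0)
    have he'neg : e' ≤ 0 := by nlinarith
    intro j
    have := hele j
    linarith
  intro j
  exact le_antisymm (hdir2 j) (hdir1 j)
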